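/- Let G be a finite simple connected super-λ' graph. If G is not λ''-connected, then ρ'(G) = δ(G) − 1, where δ(G) is the minimum degree of G. -/

import Mathlib

open SimpleGraph

variable {V : Type*}

/-- The degree of a vertex, as the cardinality of its neighbor set. -/
noncomputable def degN (G : SimpleGraph V) (v : V) : ℕ := (G.neighborSet v).ncard

/-- The minimum degree `δ(G)`. -/
noncomputable def minDeg (G : SimpleGraph V) : ℕ := sInf {k | ∃ v, degN G v = k}

/-- `d_G(X)`: the number of edges of `G` with exactly one endpoint in `X`. -/
noncomputable def dOut (G : SimpleGraph V) (X : Set V) : ℕ :=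
  {e ∈ G.edgeSet | ∃ x ∈ X, ∃ y ∈ Xᶜ, e = s(x, y)}.ncard

/-- `F` is an `h`-extra edge-cut of `G`: a set of edges of `G` whose removal disconnects `G`
and such that every connected component of `G - F` has more than `h` vertices. -/
def IsExtraEdgeCut (G : SimpleGraph V) (h : ℕ) (F : Set (Sym2 V)) : Prop :=
  F ⊆ G.edgeSet ∧ ¬(G.deleteEdges F).Connected ∧
    ∀ c : (G.deleteEdges F).ConnectedComponent, h < c.supp.ncard

/-- `G` is `λ^(h)`-connected: an `h`-extra edge-cut exists. -/
def LambdaConn (G : SimpleGraph V) (h : ℕ) : Prop := ∃ F, IsExtraEdgeCut G h F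

/-- The `h`-extra edge-connectivity `λ^(h)(G)`: the minimum cardinality of an
`h`-extra edge-cut. -/
noncomputable def lambdaH (G : SimpleGraph V) (h : ℕ) : ℕ :=
  sInf {k | ∃ F, IsExtraEdgeCut G h F ∧ F.ncard = k}

/-- `ξ_h(G)`: the minimum of `d_G(X)` over vertex sets `X` of size `h + 1` inducing a
connected subgraph. -/
noncomputable def xiH (G : SimpleGraph V) (h : ℕ) : ℕ :=
  sInf {k | ∃ X : Set V, X.ncard = h + 1 ∧ (G.induce X).Connected ∧ dOut G X = k}

/-- `G` is super-`λ^(h)`: it is connected, `λ^(h)`-connected, `λ^(h)`-optimal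
(`λ^(h)(G) = ξ_h(G)`), and every minimum `h`-extra edge-cut leaves a component with
exactly `h + 1` vertices. -/
def SuperLambda (G : SimpleGraph V) (h : ℕ) : Prop :=
  G.Connected ∧ LambdaConn G h ∧ lambdaH G h = xiH G h ∧
    ∀ F : Set (Sym2 V), IsExtraEdgeCut G h F → F.ncard = lambdaH G h →
      ∃ c : (G.deleteEdges F).ConnectedComponent, c.supp.ncard = h + 1

/-- The persistence `ρ^(h)(G)`: the largest `m` such that `G - F` is super-`λ^(h)` for
every set `F` of at most `m` edges of `G`. -/
noncomputable def rhoH (G : SimpleGraph V) (h : ℕ) : ℕ :=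
  sSup {m : ℕ | ∀ F : Set (Sym2 V), F ⊆ G.edgeSet → F.ncard ≤ m →
    SuperLambda (G.deleteEdges F) h}

/-- `ξ(G)`: the minimum edge-degree `deg x + deg y - 2` over the edges `xy` of `G`. -/
noncomputable def xiEdge (G : SimpleGraph V) : ℕ :=
  sInf {k | ∃ x y, G.Adj x y ∧ degN G x + degN G y - 2 = k}

/-- `η(G)`: the number of edges of `G` whose edge-degree equals `ξ(G)`. -/
noncomputable def eta (G : SimpleGraph V) : ℕ :=
  {e ∈ G.edgeSet | ∃ x y, e = s(x, y) ∧ degN G x + degN G y - 2 = xiEdge G}.ncard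

/-!
Removing the `δ` edges at a vertex of minimum degree isolates it, so `ρ' ≤ δ - 1`. Conversely,
let `|F| ≤ δ - 1` and `H = G - F`. Every edge cut of `G` has at least `δ` edges: a side without
internal edges contributes a whole neighbourhood, and otherwise the cut is `1`-extra, so it has at
least `λ' = ξ ≥ 2δ - 2` edges; hence `H` is connected. As `G` has no `2`-extra edge-cut, every
`1`-extra edge-cut `F'` of `H` leaves a component of order `2` (else `F ∪ F'` would be one), so
`|F'| ≥ ξ(H)`. Finally, for an edge `xy` of minimum edge-degree in `H`, the boundary of `{x, y}`
together with the vertices whose neighbours all lie in `{x, y}` is a `1`-extra edge-cut with at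
most `ξ(H)` edges, unless `H` is a star; and `H` is no star, because each leaf would have lost
`δ - 1 ≥ |F|` edges, forcing `F = ∅`, whereas the `λ'`-connected graph `G` is no star.
-/

section

variable {G H : SimpleGraph V}

def edgeBoundary (G : SimpleGraph V) (X : Set V) : Set (Sym2 V) :=
  {e ∈ G.edgeSet | ∃ x ∈ X, ∃ y ∈ Xᶜ, e = s(x, y)}

theorem dOut_eq_ncard_edgeBoundary (G : SimpleGraph V) (X : Set V) :
    dOut G X = (edgeBoundary G X).ncard := rfl

theorem mk_mem_edgeBoundary {X : Set V} {a b : V} :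
    s(a, b) ∈ edgeBoundary G X ↔ G.Adj a b ∧ ¬(a ∈ X ↔ b ∈ X) := by
  simp only [edgeBoundary, Set.mem_ofPred_eq, mem_edgeSet, Set.mem_compl_iff, Sym2.eq_iff]
  constructor
  · rintro ⟨hab, x, hx, y, hy, ⟨rfl, rfl⟩ | ⟨rfl, rfl⟩⟩ <;> tauto
  · rintro ⟨hab, hX⟩
    by_cases ha : a ∈ X
    · exact ⟨hab, a, ha, b, by tauto, Or.inl ⟨rfl, rfl⟩⟩
    · exact ⟨hab, b, by tauto, a, ha, Or.inr ⟨rfl, rfl⟩⟩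

theorem edgeBoundary_pair {x y : V} (hxy : G.Adj x y) :
    edgeBoundary G {x, y} = (G.incidenceSet x ∪ G.incidenceSet y) \ {s(x, y)} := by
  ext e
  induction e using Sym2.ind with
  | _ a b =>
    have := hxy.ne
    have := G.ne_of_adj (a := a) (b := b)
    simp only [mk_mem_edgeBoundary, Set.mem_sdiff, Set.mem_union, mk'_mem_incidenceSet_iff,
      Set.mem_singleton_iff, Set.mem_insert_iff, Sym2.eq_iff]
    grind

theorem ncard_incidenceSet [Finite V] (G : SimpleGraph V) (v : V) :
    (G.incidenceSet v).ncard = degN G v := by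
  classical
  rw [degN, ← Nat.card_coe_set_eq, ← Nat.card_coe_set_eq]
  exact Nat.card_congr (G.incidenceSetEquivNeighborSet v)

theorem dOut_pair [Finite V] {x y : V} (hxy : G.Adj x y) :
    dOut G {x, y} = degN G x + degN G y - 2 := by
  classical
  have hunion := Set.ncard_union_add_ncard_inter (G.incidenceSet x) (G.incidenceSet y)
  rw [G.incidenceSet_inter_incidenceSet_of_adj hxy, Set.ncard_singleton, ncard_incidenceSet,
    ncard_incidenceSet] at hunion
  rw [dOut_eq_ncard_edgeBoundary, edgeBoundary_pair hxy, Set.ncard_sdiff_singleton_of_mem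
    (Set.mem_union_left _ (G.mk'_mem_incidenceSet_left_iff.mpr hxy))]
  omega

theorem degN_le_dOut [Finite V] {X : Set V} {v : V}
    (hv : ∀ u, G.Adj v u → ¬(v ∈ X ↔ u ∈ X)) : degN G v ≤ dOut G X := by
  rw [← ncard_incidenceSet, dOut_eq_ncard_edgeBoundary]
  refine Set.ncard_le_ncard fun e he => ?_
  induction e using Sym2.ind with
  | _ a b =>
    obtain ⟨hab, rfl | rfl⟩ := G.mk'_mem_incidenceSet_iff.mp he
    · exact mk_mem_edgeBoundary.mpr ⟨hab, hv b hab⟩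
    · exact mk_mem_edgeBoundary.mpr ⟨hab, fun h => hv a hab.symm h.symm⟩

theorem adj_of_connected_induce_pair {x y : V} (hne : x ≠ y)
    (hc : (G.induce {x, y}).Connected) : G.Adj x y := by
  obtain ⟨p⟩ := hc.preconnected ⟨x, by simp⟩ ⟨y, by simp⟩
  have hadj : G.Adj x p.snd := p.adj_snd (p.not_nil_of_ne (by simpa using hne))
  rcases p.snd.2 with hx | hy
  · exact absurd hx hadj.ne'
  · exact hy ▸ hadj

theorem xiH_one_eq_xiEdge [Finite V] (G : SimpleGraph V) : xiH G 1 = xiEdge G := by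
  unfold xiH xiEdge
  congr 1
  ext k
  constructor
  · rintro ⟨X, hX, hXc, rfl⟩
    obtain ⟨x, y, hne, rfl⟩ := Set.ncard_eq_two.mp hX
    have hxy := adj_of_connected_induce_pair hne hXc
    exact ⟨x, y, hxy, (dOut_pair hxy).symm⟩
  · rintro ⟨x, y, hxy, rfl⟩
    exact ⟨{x, y}, Set.ncard_pair hxy.ne, induce_pair_connected_of_adj hxy, dOut_pair hxy⟩

theorem xiEdge_le {x y : V} (hxy : G.Adj x y) : xiEdge G ≤ degN G x + degN G y - 2 :=
  Nat.sInf_le ⟨x, y, hxy, rfl⟩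

theorem exists_adj_degN_add_degN_eq_xiEdge {x y : V} (hxy : G.Adj x y) :
    ∃ a b, G.Adj a b ∧ degN G a + degN G b - 2 = xiEdge G :=
  Nat.sInf_mem (s := {k | ∃ a b, G.Adj a b ∧ degN G a + degN G b - 2 = k})
    ⟨_, x, y, hxy, rfl⟩

theorem minDeg_le_degN (G : SimpleGraph V) (v : V) : minDeg G ≤ degN G v :=
  Nat.sInf_le ⟨v, rfl⟩

theorem exists_degN_eq_minDeg [Nonempty V] (G : SimpleGraph V) : ∃ v, degN G v = minDeg G :=
  Nat.sInf_mem (s := {k | ∃ v, degN G v = k}) ⟨_, Classical.arbitrary V, rfl⟩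

theorem degN_pos_of_adj [Finite V] {v u : V} (h : G.Adj v u) : 0 < degN G v :=
  (Set.ncard_pos (Set.toFinite _)).mpr ⟨u, h⟩

theorem minDeg_pos [Finite V] [Nontrivial V] (hconn : G.Connected) : 0 < minDeg G := by
  obtain ⟨v, hv⟩ := exists_degN_eq_minDeg G
  obtain ⟨u, hu⟩ := hconn.preconnected.exists_adj_of_nontrivial v
  exact hv ▸ degN_pos_of_adj hu

theorem exists_ne_ne_ne [Finite V] (hV : 3 < Nat.card V) (a b c : V) :
    ∃ w, w ≠ a ∧ w ≠ b ∧ w ≠ c := by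
  have hle : ({a, b, c} : Set V).ncard ≤ 3 := by
    have h₁ := Set.ncard_insert_le a {b, c}
    have h₂ := Set.ncard_insert_le b {c}
    rw [Set.ncard_singleton] at h₂
    omega
  obtain ⟨w, hw⟩ := (Set.ne_univ_iff_exists_notMem {a, b, c}).mp fun h => by
    rw [h, Set.ncard_univ] at hle
    omega
  simp only [Set.mem_insert_iff, Set.mem_singleton_iff, not_or] at hw
  exact ⟨w, hw⟩

theorem SimpleGraph.Reachable.mem_iff_mem {u v : V} (h : G.Reachable u v) {X : Set V}
    (hX : ∀ a b, G.Adj a b → (a ∈ X ↔ b ∈ X)) : u ∈ X ↔ v ∈ X := by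
  obtain ⟨p⟩ := h
  induction p with
  | nil => rfl
  | cons hadj _ ih => exact (hX _ _ hadj).trans ih

theorem IsExtraEdgeCut.two_mul_le_card [Finite V] [Nonempty V] {h : ℕ} {F : Set (Sym2 V)}
    (hF : IsExtraEdgeCut G h F) : 2 * (h + 1) ≤ Nat.card V := by
  obtain ⟨-, hdis, hbig⟩ := hF
  obtain ⟨a, b, hab⟩ : ∃ a b, ¬(G.deleteEdges F).Reachable a b := by
    by_contra! hall
    exact hdis ⟨hall⟩
  let Ca := (G.deleteEdges F).connectedComponentMk a
  let Cb := (G.deleteEdges F).connectedComponentMk b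
  have hdisj : Disjoint Ca.supp Cb.supp :=
    pairwise_disjoint_supp_connectedComponent _ fun h => hab (ConnectedComponent.exact h)
  have hsum := Set.ncard_union_eq hdisj
  have hle := Set.ncard_le_card (Ca.supp ∪ Cb.supp)
  have := hbig Ca
  have := hbig Cb
  omega

theorem LambdaConn.three_lt_card [Finite V] [Nonempty V] (h : LambdaConn G 1) :
    3 < Nat.card V := by
  obtain ⟨F, hF⟩ := h
  have := hF.two_mul_le_card
  omega

theorem lambdaH_le {h : ℕ} {F : Set (Sym2 V)} (hF : IsExtraEdgeCut G h F) :
    lambdaH G h ≤ F.ncard :=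
  Nat.sInf_le ⟨F, hF, rfl⟩

theorem isExtraEdgeCut_one_edgeBoundary [Finite V] {X : Set V} {x y : V} (hx : x ∈ X)
    (hy : y ∉ X) (hside : ∀ v, ∃ u, G.Adj v u ∧ (v ∈ X ↔ u ∈ X)) :
    IsExtraEdgeCut G 1 (edgeBoundary G X) := by
  refine ⟨fun e he => he.1, fun hconn => ?_, fun c => ?_⟩
  · refine hy (((hconn.preconnected x y).mem_iff_mem fun a b hab => ?_).mp hx)
    by_contra hX
    exact (deleteEdges_adj.mp hab).2 (mk_mem_edgeBoundary.mpr ⟨(deleteEdges_adj.mp hab).1, hX⟩)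
  · obtain ⟨v, rfl⟩ := c.exists_rep
    obtain ⟨u, hvu, hX⟩ := hside v
    have hvu' : (G.deleteEdges (edgeBoundary G X)).Adj v u :=
      deleteEdges_adj.mpr ⟨hvu, fun h => (mk_mem_edgeBoundary.mp h).2 hX⟩
    rw [Set.one_lt_ncard]
    exact ⟨v, rfl, u, ConnectedComponent.sound hvu'.symm.reachable, hvu.ne⟩

theorem minDeg_le_dOut [Finite V] (hconn : G.Connected) (hopt : lambdaH G 1 = xiEdge G)
    {X : Set V} {x y : V} (hx : x ∈ X) (hy : y ∉ X) : minDeg G ≤ dOut G X := by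
  by_cases hside : ∀ v, ∃ u, G.Adj v u ∧ (v ∈ X ↔ u ∈ X)
  · obtain ⟨a, b, hab, hX⟩ : ∃ a b, G.Adj a b ∧ ¬(a ∈ X ↔ b ∈ X) := by
      by_contra! h
      exact hy (((hconn.preconnected x y).mem_iff_mem h).mp hx)
    have hpos : 0 < dOut G X :=
      (Set.ncard_pos (Set.toFinite _)).mpr ⟨_, mk_mem_edgeBoundary.mpr ⟨hab, hX⟩⟩
    have hcut := lambdaH_le (isExtraEdgeCut_one_edgeBoundary hx hy hside)
    obtain ⟨a', b', -, hxi⟩ := exists_adj_degN_add_degN_eq_xiEdge hab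
    have ha := minDeg_le_degN G a'
    have hb := minDeg_le_degN G b'
    rw [hopt, ← dOut_eq_ncard_edgeBoundary] at hcut
    omega
  · simp only [not_forall, not_exists, not_and] at hside
    obtain ⟨v, hv⟩ := hside
    exact (minDeg_le_degN G v).trans (degN_le_dOut hv)

theorem connected_deleteEdges_of_ncard_lt_minDeg [Finite V] (hconn : G.Connected)
    (hopt : lambdaH G 1 = xiEdge G) {F : Set (Sym2 V)} (hF : F.ncard < minDeg G) :
    (G.deleteEdges F).Connected := by
  refine (connected_iff _).mpr ⟨fun a b => ?_, hconn.nonempty⟩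
  by_contra hab
  let X := {w | (G.deleteEdges F).Reachable a w}
  have hsub : edgeBoundary G X ⊆ F := fun e he => by
    induction e using Sym2.ind with
    | _ u w =>
      obtain ⟨huw, hX⟩ := mk_mem_edgeBoundary.mp he
      by_contra hne
      have huw' : (G.deleteEdges F).Adj u w := deleteEdges_adj.mpr ⟨huw, hne⟩
      exact hX ⟨fun hu => hu.trans huw'.reachable, fun hw => hw.trans huw'.symm.reachable⟩
  have hle := minDeg_le_dOut hconn hopt (X := X) Reachable.rfl hab
  have := Set.ncard_le_ncard hsub
  rw [dOut_eq_ncard_edgeBoundary] at hle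
  omega

theorem exists_ncard_supp_eq_two_of_not_lambdaConn_two (hG : ¬LambdaConn G 2)
    {F F' : Set (Sym2 V)} (hF : F ⊆ G.edgeSet) (hF' : IsExtraEdgeCut (G.deleteEdges F) 1 F') :
    ∃ c : ((G.deleteEdges F).deleteEdges F').ConnectedComponent, c.supp.ncard = 2 := by
  obtain ⟨hF'sub, hdis, hbig⟩ := hF'
  by_contra! hne
  rw [deleteEdges_deleteEdges] at hdis hbig hne
  refine hG ⟨F ∪ F', Set.union_subset hF fun e he => ?_, hdis, fun c => ?_⟩
  · exact ((edgeSet_deleteEdges F ▸ hF'sub) he).1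
  · have := hbig c
    have := hne c
    omega

theorem xiEdge_le_ncard_of_ncard_supp_eq_two [Finite V] {F : Set (Sym2 V)}
    (c : (G.deleteEdges F).ConnectedComponent) (hc : c.supp.ncard = 2) :
    xiEdge G ≤ F.ncard := by
  obtain ⟨u, v, huv, hsupp⟩ := Set.ncard_eq_two.mp hc
  have hu : u ∈ c.supp := hsupp ▸ Set.mem_insert u {v}
  have hv : v ∈ c.supp := hsupp ▸ Set.mem_insert_of_mem u rfl
  obtain ⟨p⟩ := c.reachable_of_mem_supp hu hv
  have hadj := p.adj_snd (p.not_nil_of_ne huv)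
  have hsnd : p.snd = v := by
    have := c.mem_supp_of_adj_mem_supp hu hadj
    rw [hsupp] at this
    exact this.resolve_left hadj.ne'
  have hGuv := (deleteEdges_adj.mp (hsnd ▸ hadj)).1
  have hsub : edgeBoundary G {u, v} ⊆ F := fun e he => by
    induction e using Sym2.ind with
    | _ a b =>
      obtain ⟨hab, hX⟩ := mk_mem_edgeBoundary.mp he
      by_contra hne
      have hab' : (G.deleteEdges F).Adj a b := deleteEdges_adj.mpr ⟨hab, hne⟩
      rw [← hsupp] at hX
      exact hX ⟨fun ha => c.mem_supp_of_adj_mem_supp ha hab',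
        fun hb => c.mem_supp_of_adj_mem_supp hb hab'.symm⟩
  calc xiEdge G ≤ degN G u + degN G v - 2 := xiEdge_le hGuv
    _ = dOut G {u, v} := (dOut_pair hGuv).symm
    _ ≤ F.ncard := Set.ncard_le_ncard hsub

theorem superLambda_one_of_forall_exists_ncard_supp_eq_two [Finite V] (hconn : G.Connected)
    (hcut : ∃ F, IsExtraEdgeCut G 1 F ∧ F.ncard ≤ xiEdge G)
    (hsuper : ∀ F, IsExtraEdgeCut G 1 F →
      ∃ c : (G.deleteEdges F).ConnectedComponent, c.supp.ncard = 2) :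
    SuperLambda G 1 := by
  obtain ⟨F, hF, hFle⟩ := hcut
  obtain ⟨F₀, hF₀, hF₀card⟩ :
      lambdaH G 1 ∈ {k | ∃ F, IsExtraEdgeCut G 1 F ∧ F.ncard = k} :=
    Nat.sInf_mem ⟨_, F, hF, rfl⟩
  obtain ⟨c, hc⟩ := hsuper F₀ hF₀
  refine ⟨hconn, ⟨F, hF⟩, ?_, fun F' hF' _ => hsuper F' hF'⟩
  rw [xiH_one_eq_xiEdge]
  exact le_antisymm ((lambdaH_le hF).trans hFle)
    (hF₀card ▸ xiEdge_le_ncard_of_ncard_supp_eq_two c hc)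

def IsStarAt (G : SimpleGraph V) (c : V) : Prop :=
  ∀ w, w ≠ c → G.neighborSet w = {c}

theorem IsStarAt.not_lambdaConn_one [Finite V] {c : V} (hG : IsStarAt G c) :
    ¬LambdaConn G 1 := by
  rintro ⟨F, -, hdis, hbig⟩
  have : Nonempty V := ⟨c⟩
  obtain ⟨w, hw⟩ : ∃ w, ¬(G.deleteEdges F).Reachable c w := by
    by_contra! h
    exact hdis ⟨fun u v => (h u).symm.trans (h v)⟩
  have hwc : w ≠ c := fun h => hw (h ▸ Reachable.rfl)
  let C := (G.deleteEdges F).connectedComponentMk w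
  obtain ⟨u, hu, huw⟩ := Set.exists_ne_of_one_lt_ncard (hbig C) w
  obtain ⟨p⟩ := C.reachable_of_mem_supp rfl hu
  have hadj := p.adj_snd (p.not_nil_of_ne huw.symm)
  have hsnd : p.snd = c := by
    rw [← Set.mem_singleton_iff, ← hG w hwc]
    exact (deleteEdges_adj.mp hadj).1
  exact hw (hsnd ▸ hadj.reachable).symm

theorem degN_le_ncard_add_degN_deleteEdges [Finite V] (F : Set (Sym2 V)) (v : V) :
    degN G v ≤ {e ∈ F | v ∈ e}.ncard + degN (G.deleteEdges F) v := by
  refine (Set.ncard_le_ncard_sdiff_add_ncard _ _).trans (Nat.add_le_add_right ?_ _)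
  refine Set.ncard_le_ncard_of_injOn (fun u => s(v, u)) (fun u ⟨hu, hnu⟩ => ?_)
    (fun a _ b _ h => Sym2.congr_right.mp h)
  refine ⟨?_, Sym2.mem_mk_left v u⟩
  by_contra hF
  exact hnu (deleteEdges_adj.mpr ⟨hu, hF⟩)

theorem eq_empty_of_isStarAt_deleteEdges [Finite V] (hV : 3 < Nat.card V) {F : Set (Sym2 V)}
    (hF : F.ncard ≤ minDeg G - 1) {c : V} (hstar : IsStarAt (G.deleteEdges F) c) : F = ∅ := by
  refine Set.eq_empty_iff_forall_notMem.mpr fun e he => ?_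
  induction e using Sym2.ind with
  | _ a b =>
    obtain ⟨ℓ, hℓa, hℓb, hℓc⟩ := exists_ne_ne_ne hV a b c
    -- the leaf `ℓ` lost at least `δ - 1 ≥ |F|` edges, so every edge of `F` contains it
    have hall : {e ∈ F | ℓ ∈ e} = F := by
      refine Set.eq_of_subset_of_ncard_le (Set.sep_subset _ _) ?_
      have hdeg := degN_le_ncard_add_degN_deleteEdges (G := G) F ℓ
      have hmin := minDeg_le_degN G ℓ
      have hleaf : degN (G.deleteEdges F) ℓ = 1 := by
        rw [degN, hstar ℓ hℓc, Set.ncard_singleton]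
      omega
    rw [← hall] at he
    rcases Sym2.mem_iff.mp he.2 with h | h
    · exact hℓa h
    · exact hℓb h

theorem isStarAt_of_adj_of_not_adj [Finite V] {x y z : V} (hside : ∀ v, ∃ u, H.Adj v u)
    (hxy : H.Adj x y) (hN : ∀ w, w ≠ x → w ≠ y → H.neighborSet w ⊆ {x, y})
    (hzx : H.Adj z x) (hzy : ¬H.Adj z y) (hz : z ≠ y)
    (hmin : degN H x + degN H y ≤ degN H z + degN H x) : IsStarAt H x := by
  have hNz : H.neighborSet z = {x} := by
    refine Set.Subset.antisymm (fun u hu => ?_) (Set.singleton_subset_iff.mpr hzx)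
    exact (hN z hzx.ne hz hu).resolve_right fun h => hzy (h ▸ hu)
  have hdy : degN H y = 1 := by
    have hdz : degN H z = 1 := by rw [degN, hNz, Set.ncard_singleton]
    have := degN_pos_of_adj hxy.symm
    omega
  have hNy : H.neighborSet y = {x} := by
    obtain ⟨a, ha⟩ := Set.ncard_eq_one.mp hdy
    rw [ha, ← Set.mem_singleton_iff.mp (ha ▸ hxy.symm : x ∈ ({a} : Set V))]
  intro w hwx
  by_cases hwy : w = y
  · exact hwy ▸ hNy
  have hwy' : ¬H.Adj w y := fun h => hwx (Set.mem_singleton_iff.mp (hNy ▸ h.symm))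
  have hsub : H.neighborSet w ⊆ {x} := fun u hu =>
    (hN w hwx hwy hu).resolve_right fun h => hwy' (h ▸ hu)
  obtain ⟨t, ht⟩ := hside w
  exact (Set.Nonempty.subset_singleton_iff ⟨t, ht⟩).mp hsub

theorem exists_adj_ne_of_minimal_edge [Finite V] (hconn : H.Connected) (hV : 3 < Nat.card V)
    (hstar : ∀ c, ¬IsStarAt H c) {x y : V} (hxy : H.Adj x y)
    (hmin : ∀ a b, H.Adj a b → degN H x + degN H y ≤ degN H a + degN H b) :
    ∃ v u, H.Adj v u ∧ v ≠ x ∧ v ≠ y ∧ u ≠ x ∧ u ≠ y := by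
  have : Nontrivial V := Finite.one_lt_card_iff_nontrivial.mp (by omega)
  have hside := hconn.preconnected.exists_adj_of_nontrivial
  by_contra! h
  have hN : ∀ w, w ≠ x → w ≠ y → H.neighborSet w ⊆ {x, y} := fun w hwx hwy u hu => by
    by_cases hux : u = x
    · exact Or.inl hux
    · exact Or.inr (h w u hu hwx hwy hux)
  obtain ⟨z, hzx, hzy, -⟩ := exists_ne_ne_ne hV x y y
  by_cases hboth : H.Adj z x ∧ H.Adj z y
  · -- by minimality of `xy`, the triangle `xyz` is a whole connected component
    have hdz : degN H z = 2 := by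
      rw [degN, Set.Subset.antisymm (hN z hzx hzy) (Set.insert_subset hboth.1
        (Set.singleton_subset_iff.mpr hboth.2)), Set.ncard_pair hxy.ne]
    have h1 := hmin z x hboth.1
    have h2 := hmin z y hboth.2
    have hNx : {y, z} = H.neighborSet x := Set.eq_of_subset_of_ncard_le
      (Set.insert_subset hxy (Set.singleton_subset_iff.mpr hboth.1.symm))
      (by rw [Set.ncard_pair hzy.symm]; exact (show degN H x ≤ 2 by omega))
    have hNy : {x, z} = H.neighborSet y := Set.eq_of_subset_of_ncard_le
      (Set.insert_subset hxy.symm (Set.singleton_subset_iff.mpr hboth.2.symm))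
      (by rw [Set.ncard_pair hzx.symm]; exact (show degN H y ≤ 2 by omega))
    obtain ⟨w, hwx, hwy, hwz⟩ := exists_ne_ne_ne hV x y z
    obtain ⟨u, hu⟩ := hside w
    rcases hN w hwx hwy hu with rfl | rfl
    · rcases (hNx ▸ hu.symm : w ∈ ({y, z} : Set V)) with h | h
      exacts [hwy h, hwz h]
    · rcases (hNy ▸ hu.symm : w ∈ ({x, z} : Set V)) with h | h
      exacts [hwx h, hwz h]
  · obtain ⟨u, hu⟩ := hside z
    rcases hN z hzx hzy hu with rfl | rfl
    · exact hstar u (isStarAt_of_adj_of_not_adj hside hxy hN hu (fun h => hboth ⟨hu, h⟩) hzy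
        (hmin z u hu))
    · refine hstar u (isStarAt_of_adj_of_not_adj hside hxy.symm (fun w h1 h2 => ?_) hu
        (fun h => hboth ⟨h, hu⟩) hzx (by have := hmin z u hu; omega))
      rw [Set.pair_comm]
      exact hN w h2 h1

theorem exists_isExtraEdgeCut_one_le_xiEdge [Finite V] (hconn : H.Connected)
    (hV : 3 < Nat.card V) (hstar : ∀ c, ¬IsStarAt H c) :
    ∃ F, IsExtraEdgeCut H 1 F ∧ F.ncard ≤ xiEdge H := by
  have : Nontrivial V := Finite.one_lt_card_iff_nontrivial.mp (by omega)
  have hside := hconn.preconnected.exists_adj_of_nontrivial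
  obtain ⟨y₀, h₀⟩ := hside (Classical.arbitrary V)
  obtain ⟨x, y, hxy, hxi⟩ := exists_adj_degN_add_degN_eq_xiEdge h₀
  have hmin : ∀ a b, H.Adj a b → degN H x + degN H y ≤ degN H a + degN H b :=
    fun a b hab => by
      have := xiEdge_le hab
      have := degN_pos_of_adj hab
      have := degN_pos_of_adj hab.symm
      omega
  obtain ⟨v, u, hvu, hvx, hvy, hux, huy⟩ :=
    exists_adj_ne_of_minimal_edge hconn hV hstar hxy hmin
  set P : Set V := {x, y}
  set X : Set V := P ∪ {w | H.neighborSet w ⊆ P}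
  have hnotP : ∀ {a b}, H.Adj a b → a ∉ P → b ∉ P → a ∉ X := fun hab ha hb hX =>
    hX.elim ha fun hN => hb (hN hab)
  have hvX : v ∉ X := hnotP hvu (by simp [P, hvx, hvy]) (by simp [P, hux, huy])
  refine ⟨edgeBoundary H X, isExtraEdgeCut_one_edgeBoundary (Or.inl (Or.inl rfl)) hvX ?_, ?_⟩
  · intro w
    by_cases hwP : w ∈ P
    · rcases hwP with rfl | rfl
      · exact ⟨y, hxy, iff_of_true (Or.inl (Or.inl rfl)) (Or.inl (Or.inr rfl))⟩
      · exact ⟨x, hxy.symm, iff_of_true (Or.inl (Or.inr rfl)) (Or.inl (Or.inl rfl))⟩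
    by_cases hwN : H.neighborSet w ⊆ P
    · obtain ⟨t, ht⟩ := hside w
      exact ⟨t, ht, iff_of_true (Or.inr hwN) (Or.inl (hwN ht))⟩
    · obtain ⟨t, ht, htP⟩ := Set.not_subset.mp hwN
      exact ⟨t, ht, iff_of_false (hnotP ht hwP htP) (hnotP ht.symm htP hwP)⟩
  · have hsub : edgeBoundary H X ⊆ edgeBoundary H P := fun e he => by
      induction e using Sym2.ind with
      | _ a b =>
        obtain ⟨hab, hX⟩ := mk_mem_edgeBoundary.mp he
        refine mk_mem_edgeBoundary.mpr ⟨hab, fun hP => hX ?_⟩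
        by_cases ha : a ∈ P
        · exact iff_of_true (Or.inl ha) (Or.inl (hP.mp ha))
        · exact iff_of_false (hnotP hab ha (hP.not.mp ha)) (hnotP hab.symm (hP.not.mp ha) ha)
    calc (edgeBoundary H X).ncard ≤ (edgeBoundary H P).ncard := Set.ncard_le_ncard hsub
      _ = xiEdge H := hxi ▸ dOut_pair hxy

theorem not_connected_deleteIncidenceSet [Nontrivial V] (G : SimpleGraph V) (v : V) :
    ¬(G.deleteIncidenceSet v).Connected := fun h =>
  let ⟨_, hu⟩ := h.preconnected.exists_adj_of_nontrivial v
  (deleteIncidenceSet_adj.mp hu).2.1 rfl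

theorem superLambda_one_deleteEdges [Finite V] (hs : SuperLambda G 1) (hG : ¬LambdaConn G 2)
    {F : Set (Sym2 V)} (hF : F ⊆ G.edgeSet) (hFcard : F.ncard ≤ minDeg G - 1) :
    SuperLambda (G.deleteEdges F) 1 := by
  obtain ⟨hconn, hlc, hopt, -⟩ := hs
  rw [xiH_one_eq_xiEdge] at hopt
  have : Nonempty V := hconn.nonempty
  have hV := hlc.three_lt_card
  have : Nontrivial V := Finite.one_lt_card_iff_nontrivial.mp (by omega)
  have hH := connected_deleteEdges_of_ncard_lt_minDeg hconn hopt (F := F)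
    (by have := minDeg_pos hconn (G := G); omega)
  have hstar : ∀ c, ¬IsStarAt (G.deleteEdges F) c := fun c hc => by
    rw [eq_empty_of_isStarAt_deleteEdges hV hFcard hc, deleteEdges_empty] at hc
    exact hc.not_lambdaConn_one hlc
  exact superLambda_one_of_forall_exists_ncard_supp_eq_two hH
    (exists_isExtraEdgeCut_one_le_xiEdge hH hV hstar)
    fun F' hF' => exists_ncard_supp_eq_two_of_not_lambdaConn_two hG hF hF'

end

/-- If `G` is super-`λ'` and not `λ''`-connected, then `ρ'(G) = δ(G) - 1`. -/
theorem stmt4 {V : Type*} [Fintype V] (G : SimpleGraph V)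
    (hs : SuperLambda G 1) (hnl2 : ¬LambdaConn G 2) :
    rhoH G 1 = minDeg G - 1 := by
  set S := {m : ℕ | ∀ F : Set (Sym2 V), F ⊆ G.edgeSet → F.ncard ≤ m →
    SuperLambda (G.deleteEdges F) 1}
  have hmem : minDeg G - 1 ∈ S := fun F hF hcard => superLambda_one_deleteEdges hs hnl2 hF hcard
  have hub : ∀ m ∈ S, m ≤ minDeg G - 1 := fun m hm => by
    by_contra! hlt
    have : Nonempty V := hs.1.nonempty
    have : Nontrivial V :=
      Finite.one_lt_card_iff_nontrivial.mp (by have := hs.2.1.three_lt_card; omega)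
    obtain ⟨v, hv⟩ := exists_degN_eq_minDeg G
    exact not_connected_deleteIncidenceSet G v
      (hm _ (G.incidenceSet_subset v) (by rw [ncard_incidenceSet]; omega)).1
  exact le_antisymm (csSup_le ⟨_, hmem⟩ hub) (le_csSup ⟨_, hub⟩ hmem)
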